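/- Let C₂ ⊆ C₁ ⊆ F_2^n be linear codes and let t be a natural number such that both C₁ and C₂^⊥ have minimum distance greater than 2t. Let w₁, w₂ ∈ C₂^⊥ with w₁ + w₂ ∉ C₁^⊥, and let a, a', b, b' ∈ F_2^n each of Hamming weight at most t. Then ⟨E_{a,b} c_{w₁}, E_{a',b'} c_{w₂}⟩ = 0, where the codeword states are defined with respect to C₁ and ⟨f, g⟩ = Σ_{x ∈ F_2^n} conj(f(x))·g(x). (Distinct quantum codewords remain orthogonal after arbitrary combinations of at most t bit errors and at most t phase errors.) -/

import Mathlib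

open Finset
open scoped Classical

/-- The dual code `C^⊥ = {v : ∀ c ∈ C, v·c = 0}`. -/
def dualCode {n : ℕ} (C : Submodule (ZMod 2) (Fin n → ZMod 2)) :
    Submodule (ZMod 2) (Fin n → ZMod 2) where
  carrier := {v | ∀ c ∈ C, ∑ i, v i * c i = 0}
  add_mem' := by
    intro a b ha hb c hc
    simp only [Set.mem_setOf_eq] at *
    simp [Pi.add_apply, add_mul, Finset.sum_add_distrib, ha c hc, hb c hc]
  zero_mem' := by simp
  smul_mem' := by
    intro m a ha c hc
    simp only [Set.mem_setOf_eq] at *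
    simp [Pi.smul_apply, smul_eq_mul, mul_assoc, ← Finset.mul_sum, ha c hc]

/-- `(-1)^b` for `b ∈ F₂`, as a complex number. -/
def signC (b : ZMod 2) : ℂ := if b = 0 then 1 else -1

/-- The codeword state `c_w` with respect to `C₁`. -/
noncomputable def codewordState {n : ℕ} (C : Submodule (ZMod 2) (Fin n → ZMod 2))
    (w : Fin n → ZMod 2) : (Fin n → ZMod 2) → ℂ := fun x =>
  if x ∈ C then
    (((2 : ℝ) ^ (-(Module.finrank (ZMod 2) C : ℝ) / 2) : ℝ) : ℂ) * signC (∑ i, x i * w i)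
  else 0

/-- The error operator `E_{a,b}` (bit errors `a`, phase errors `b`):
`(E_{a,b} f) x = (-1)^(b·x) · f (x + a)`. -/
def errOp {n : ℕ} (a b : Fin n → ZMod 2) (f : (Fin n → ZMod 2) → ℂ) :
    (Fin n → ZMod 2) → ℂ := fun x => signC (∑ i, b i * x i) * f (x + a)

/- ## Auxiliary lemmas -/

lemma zmod2_self_add (u : ZMod 2) : u + u = 0 := by revert u; decide

lemma vec_add_self {n : ℕ} (v : Fin n → ZMod 2) : v + v = 0 := by
  funext i; exact zmod2_self_add (v i)

lemma signC_add (u v : ZMod 2) : signC (u + v) = signC u * signC v := by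
  rcases (by decide : ∀ z : ZMod 2, z = 0 ∨ z = 1) u with rfl | rfl <;>
    rcases (by decide : ∀ z : ZMod 2, z = 0 ∨ z = 1) v with rfl | rfl <;>
    simp [signC, (by decide : (1:ZMod 2)+1 = 0), (by decide : (1:ZMod 2) ≠ 0)]

lemma signC_conj (u : ZMod 2) : (starRingEnd ℂ) (signC u) = signC u := by
  rcases (by decide : ∀ z : ZMod 2, z = 0 ∨ z = 1) u with rfl | rfl <;>
    simp [signC, (by decide : (1:ZMod 2) ≠ 0)]

lemma dot_add_right {n : ℕ} (v x y : Fin n → ZMod 2) :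
    ∑ i, v i * (x + y) i = (∑ i, v i * x i) + ∑ i, v i * y i := by
  simp [mul_add, Finset.sum_add_distrib]

lemma hn_add_le {n : ℕ} (u v : Fin n → ZMod 2) :
    hammingNorm (u + v) ≤ hammingNorm u + hammingNorm v := by
  have h1 : hammingNorm (u + v) = hammingDist u v := by
    rw [hammingDist_eq_hammingNorm]
    congr 1
    funext i
    rw [Pi.add_apply, Pi.add_apply, Pi.neg_apply,
      ((by decide : ∀ x : ZMod 2, -x = x) (u i) : -(u i) = u i)]
  rw [h1]
  calc hammingDist u v ≤ hammingDist u 0 + hammingDist 0 v := hammingDist_triangle _ _ _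
    _ = hammingNorm u + hammingNorm v := by
        rw [hammingDist_zero_right, hammingDist_comm, hammingDist_zero_right]

lemma mem_dualCode {n : ℕ} (C : Submodule (ZMod 2) (Fin n → ZMod 2))
    (v : Fin n → ZMod 2) : v ∈ dualCode C ↔ ∀ c ∈ C, ∑ i, v i * c i = 0 := Iff.rfl

lemma charSum {n : ℕ} (C : Submodule (ZMod 2) (Fin n → ZMod 2)) (v : Fin n → ZMod 2)
    (hv : v ∉ dualCode C) :
    ∑ x : Fin n → ZMod 2, (if x ∈ C then signC (∑ i, v i * x i) else 0) = 0 := by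
  obtain ⟨c₀, hc₀, hdc⟩ : ∃ c ∈ C, ∑ i, v i * c i ≠ 0 := by
    by_contra hcon
    push_neg at hcon
    exact hv ((mem_dualCode C v).mpr hcon)
  have hdc1 : ∑ i, v i * c₀ i = 1 := by
    revert hdc; generalize (∑ i, v i * c₀ i) = z; revert z; decide
  set S := ∑ x : Fin n → ZMod 2, (if x ∈ C then signC (∑ i, v i * x i) else 0) with hS
  have hkey : S = -S := by
    calc S = ∑ x : Fin n → ZMod 2,
          (if (x + c₀) ∈ C then signC (∑ i, v i * (x + c₀) i) else 0) := by
            rw [hS]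
            exact (Fintype.sum_equiv (Equiv.addRight c₀)
              (fun x => if (x + c₀) ∈ C then signC (∑ i, v i * (x + c₀) i) else 0)
              (fun x => if x ∈ C then signC (∑ i, v i * x i) else 0)
              (fun x => rfl)).symm
      _ = ∑ x : Fin n → ZMod 2, -(if x ∈ C then signC (∑ i, v i * x i) else 0) := by
            apply Finset.sum_congr rfl
            intro x _
            have hmem : (x + c₀) ∈ C ↔ x ∈ C := by
              constructor
              · intro hx
                have := C.add_mem hx hc₀
                rwa [add_assoc, vec_add_self, add_zero] at this
              · intro hx; exact C.add_mem hx hc₀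
            by_cases hx : x ∈ C
            · rw [if_pos (hmem.mpr hx), if_pos hx]
              rw [dot_add_right, hdc1, signC_add]
              simp [signC]
            · rw [if_neg (fun hc => hx (hmem.mp hc)), if_neg hx, neg_zero]
      _ = -S := by rw [hS]; exact Finset.sum_neg_distrib (f := fun x => if x ∈ C then signC (∑ i, v i * x i) else 0)
  have h3 : (2:ℂ) * S = 0 := by linear_combination hkey
  exact (mul_eq_zero.mp h3).resolve_left two_ne_zero

/-- Distinct quantum codewords of the CSS code remain orthogonal after
arbitrary combinations of at most `t` bit errors and at most `t` phase errors. -/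
theorem erroredCodewordStates_orthogonal
    {n t : ℕ} (C₁ C₂ : Submodule (ZMod 2) (Fin n → ZMod 2)) (h : C₂ ≤ C₁)
    (hd₁ : ∀ v ∈ C₁, v ≠ 0 → 2 * t < hammingNorm v)
    (hd₂ : ∀ v ∈ dualCode C₂, v ≠ 0 → 2 * t < hammingNorm v)
    (w₁ w₂ : Fin n → ZMod 2)
    (hw₁ : w₁ ∈ dualCode C₂) (hw₂ : w₂ ∈ dualCode C₂)
    (hne : w₁ + w₂ ∉ dualCode C₁)
    (a a' b b' : Fin n → ZMod 2)
    (ha : hammingNorm a ≤ t) (ha' : hammingNorm a' ≤ t)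
    (hb : hammingNorm b ≤ t) (hb' : hammingNorm b' ≤ t) :
    (∑ x : Fin n → ZMod 2,
        (starRingEnd ℂ) (errOp a b (codewordState C₁ w₁) x)
          * errOp a' b' (codewordState C₁ w₂) x) = 0 := by
  by_cases hac : a + a' ∈ C₁
  · -- then a' = a
    have h0 : a + a' = 0 := by
      by_contra hne0
      have h1 := hd₁ _ hac hne0
      have h2 := hn_add_le a a'
      omega
    have haa : a = a' := by
      funext i
      have hfi : a i + a' i = 0 := congrFun h0 i
      revert hfi
      generalize a i = p; generalize a' i = q
      revert p q; decide
    subst haa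
    set N : ℝ := (2:ℝ) ^ (-(Module.finrank (ZMod 2) C₁ : ℝ) / 2) with hN
    set v : Fin n → ZMod 2 := b + b' + w₁ + w₂ with hv
    set K : ZMod 2 := ∑ i, (b + b') i * a i with hK
    -- v is not in the dual of C₁
    have hvnot : v ∉ dualCode C₁ := by
      intro hvmem
      have hdual_mono : dualCode C₁ ≤ dualCode C₂ := fun u hu c hc => hu c (h hc)
      have hw : w₁ + w₂ ∈ dualCode C₂ := (dualCode C₂).add_mem hw₁ hw₂
      have hbb : b + b' ∈ dualCode C₂ := by
        have hsum : v + (w₁ + w₂) ∈ dualCode C₂ :=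
          (dualCode C₂).add_mem (hdual_mono hvmem) hw
        have heq : v + (w₁ + w₂) = b + b' := by
          rw [hv, show b + b' + w₁ + w₂ + (w₁ + w₂) = (b + b') + ((w₁ + w₂) + (w₁ + w₂)) from
            by abel, vec_add_self, add_zero]
        rwa [heq] at hsum
      have hbb0 : b + b' = 0 := by
        by_contra hb0
        have h1 := hd₂ _ hbb hb0
        have h2 := hn_add_le b b'
        omega
      have hfin : w₁ + w₂ ∈ dualCode C₁ := by
        have heq : v = w₁ + w₂ := by
          rw [hv, show b + b' + w₁ + w₂ = (b + b') + (w₁ + w₂) from by abel, hbb0, zero_add]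
        rwa [heq] at hvmem
      exact hne hfin
    -- exponent computation
    have hexp : ∀ x : Fin n → ZMod 2,
        (∑ i, v i * (x + a) i) + K
          = (∑ i, b i * x i) + (∑ i, (x + a) i * w₁ i)
            + ((∑ i, b' i * x i) + (∑ i, (x + a) i * w₂ i)) := by
      intro x
      rw [hK, hv, ← Finset.sum_add_distrib, ← Finset.sum_add_distrib,
        ← Finset.sum_add_distrib, ← Finset.sum_add_distrib]
      apply Finset.sum_congr rfl
      intro i _
      simp only [Pi.add_apply]
      generalize b i = p; generalize b' i = q; generalize x i = X
      generalize a i = A; generalize w₁ i = W1; generalize w₂ i = W2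
      revert p q X A W1 W2; decide
    -- termwise rewriting
    have hterm : ∀ x : Fin n → ZMod 2,
        (starRingEnd ℂ) (errOp a b (codewordState C₁ w₁) x)
            * errOp a b' (codewordState C₁ w₂) x
          = (((N:ℝ):ℂ)^2 * signC K) *
              (if x + a ∈ C₁ then signC (∑ i, v i * (x + a) i) else 0) := by
      intro x
      simp only [errOp, codewordState]
      by_cases hx : x + a ∈ C₁
      · rw [if_pos hx, if_pos hx, if_pos hx]
        rw [map_mul, map_mul, signC_conj, Complex.conj_ofReal, signC_conj]
        have e1 : signC (∑ i, v i * (x + a) i) * signC K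
            = signC (∑ i, b i * x i) * signC (∑ i, (x + a) i * w₁ i)
              * (signC (∑ i, b' i * x i) * signC (∑ i, (x + a) i * w₂ i)) := by
          rw [← signC_add, ← signC_add, ← signC_add, ← signC_add, hexp x]
        linear_combination (-(((N:ℝ):ℂ)^2)) * e1
      · rw [if_neg hx, if_neg hx, if_neg hx]
        simp
    calc (∑ x : Fin n → ZMod 2,
        (starRingEnd ℂ) (errOp a b (codewordState C₁ w₁) x)
          * errOp a b' (codewordState C₁ w₂) x)
        = ∑ x : Fin n → ZMod 2, (((N:ℝ):ℂ)^2 * signC K) *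
            (if x + a ∈ C₁ then signC (∑ i, v i * (x + a) i) else 0) :=
          Finset.sum_congr rfl (fun x _ => hterm x)
      _ = (((N:ℝ):ℂ)^2 * signC K) * ∑ x : Fin n → ZMod 2,
            (if x + a ∈ C₁ then signC (∑ i, v i * (x + a) i) else 0) := by
          rw [Finset.mul_sum]
      _ = (((N:ℝ):ℂ)^2 * signC K) * ∑ y : Fin n → ZMod 2,
            (if y ∈ C₁ then signC (∑ i, v i * y i) else 0) := by
          congr 1
          exact Fintype.sum_equiv (Equiv.addRight a)
            (fun x => if x + a ∈ C₁ then signC (∑ i, v i * (x + a) i) else 0)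
            (fun y => if y ∈ C₁ then signC (∑ i, v i * y i) else 0)
            (fun x => rfl)
      _ = 0 := by rw [charSum C₁ v hvnot, mul_zero]
  · -- every term vanishes
    apply Finset.sum_eq_zero
    intro x _
    by_cases h1 : x + a ∈ C₁
    · by_cases h2 : x + a' ∈ C₁
      · exfalso
        have := C₁.add_mem h1 h2
        rw [show (x + a) + (x + a') = (x + x) + (a + a') from by abel, vec_add_self,
          zero_add] at this
        exact hac this
      · simp [errOp, codewordState, h2]
    · simp [errOp, codewordState, h1]
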